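/- arXiv:2007.12628 — 5 statements merged into one kernel-verified Lean document; each statement's English description precedes it below -/
import Mathlib

section
/- Let H be a real Hilbert space, H₀ a finite-dimensional subspace of dimension n with orthonormal basis e₁,...,e_n, and T a norm-one bounded linear operator on H with M_T = S_{H₀}. Then the span of the functionals {x ⊗ Tx : x ∈ S_{H₀}}, where (x ⊗ Tx)(S) = ⟨Sx, Tx⟩, equals the span of {e_i ⊗ Te_j + e_j ⊗ Te_i : 1 ≤ i ≤ j ≤ n}, and hence has dimension at most n(n+1)/2. -/
/-!
The map `(x, y) ↦ x ⊗ Ty` is bilinear, so this is polarization. For `x` in the span of the `eᵢ`,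
`x ⊗ Tx` is half the symmetrised form at `(x, x)`, hence a combination of the
`eᵢ ⊗ Teⱼ + eⱼ ⊗ Teᵢ`; conversely `eᵢ ⊗ Teⱼ + eⱼ ⊗ Teᵢ = (eᵢ + eⱼ) ⊗ T(eᵢ + eⱼ) - eᵢ ⊗ Teᵢ - eⱼ ⊗ Teⱼ`.
Since `x ⊗ Tx` is homogeneous of degree two, unit vectors span as much as all of `H₀`. The
symmetric generators are indexed by unordered pairs `{i, j}`, of which there are `n(n+1)/2`.
-/

/-- The functional `x ⊗ Ty` on bounded operators, `S ↦ ⟨Sx, Ty⟩`. -/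
noncomputable def tensorFun {H : Type*} [NormedAddCommGroup H] [InnerProductSpace ℝ H]
    (T : H →L[ℝ] H) (x y : H) : (H →L[ℝ] H) →ₗ[ℝ] ℝ where
  toFun S := (inner ℝ (S x) (T y) : ℝ)
  map_add' S₁ S₂ := by simp [inner_add_left]
  map_smul' c S := by simp [inner_smul_left]

open Submodule Set

section Polarization

variable {R M N : Type*} [CommRing R] [AddCommGroup M] [Module R M] [AddCommGroup N] [Module R N]

theorem span_diag_eq_span_symm [Invertible (2 : R)] (B : M →ₗ[R] M →ₗ[R] N) {ι : Type*}
    (v : ι → M) :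
    span R {f | ∃ x ∈ span R (range v), f = B x x} =
      span R {f | ∃ i j, f = B (v i) (v j) + B (v j) (v i)} := by
  apply le_antisymm
  · rw [span_le]
    rintro _ ⟨x, hx, rfl⟩
    have hmem := apply_mem_map₂ (B + B.flip) hx hx
    rw [map₂_span_span, image2_range] at hmem
    have hrange : range (fun p : ι × ι => (B + B.flip) (v p.1) (v p.2)) =
        {f | ∃ i j, f = B (v i) (v j) + B (v j) (v i)} := by
      ext f
      simp [eq_comm]
    have hhalf : B x x = (⅟2 : R) • (B + B.flip) x x := by
      rw [LinearMap.add_apply, LinearMap.add_apply, LinearMap.flip_apply, ← two_smul R,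
        smul_smul, invOf_mul_self, one_smul]
    rw [hhalf, ← hrange]
    exact smul_mem _ _ hmem
  · rw [span_le]
    rintro _ ⟨i, j, rfl⟩
    have hpolar : B (v i) (v j) + B (v j) (v i) =
        B (v i + v j) (v i + v j) - B (v i) (v i) - B (v j) (v j) := by
      simp only [map_add, LinearMap.add_apply]
      abel
    have hdiag : ∀ x ∈ span R (range v),
        B x x ∈ span R {f | ∃ x ∈ span R (range v), f = B x x} :=
      fun x hx => subset_span ⟨x, hx, rfl⟩
    have hvi : v i ∈ span R (range v) := subset_span (mem_range_self i)
    have hvj : v j ∈ span R (range v) := subset_span (mem_range_self j)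
    rw [hpolar]
    exact sub_mem (sub_mem (hdiag _ (add_mem hvi hvj)) (hdiag _ hvi)) (hdiag _ hvj)

end Polarization

theorem span_diag_unit_eq_span_diag {E N : Type*} [NormedAddCommGroup E] [NormedSpace ℝ E]
    [AddCommGroup N] [Module ℝ N] (B : E →ₗ[ℝ] E →ₗ[ℝ] N) (V : Submodule ℝ E) :
    span ℝ {f | ∃ x, x ∈ V ∧ ‖x‖ = 1 ∧ f = B x x} = span ℝ {f | ∃ x ∈ V, f = B x x} := by
  refine le_antisymm (span_mono fun f ⟨x, hx, _, hf⟩ => ⟨x, hx, hf⟩) ?_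
  rw [span_le]
  rintro _ ⟨x, hx, rfl⟩
  rcases eq_or_ne x 0 with rfl | hx0
  · simp
  have hn : ‖x‖ ≠ 0 := norm_ne_zero_iff.mpr hx0
  have hscale : B x x = (‖x‖ * ‖x‖) • B (‖x‖⁻¹ • x) (‖x‖⁻¹ • x) := by
    conv_lhs => rw [← smul_inv_smul₀ hn x]
    simp only [map_smul, LinearMap.smul_apply, smul_smul]
    congr 1
    ring
  rw [hscale]
  exact smul_mem _ _ (subset_span ⟨_, V.smul_mem _ hx, norm_smul_inv_norm hx0, rfl⟩)

theorem setOf_exists_le_and_eq_of_symm {ι α : Type*} [LinearOrder ι] {g : ι → ι → α}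
    (hg : ∀ i j, g i j = g j i) :
    {f | ∃ i j, i ≤ j ∧ f = g i j} = {f | ∃ i j, f = g i j} := by
  ext f
  refine ⟨fun ⟨i, j, _, hf⟩ => ⟨i, j, hf⟩, fun ⟨i, j, hf⟩ => ?_⟩
  rcases le_total i j with hij | hji
  · exact ⟨i, j, hij, hf⟩
  · exact ⟨j, i, hji, hf.trans (hg i j)⟩

theorem finrank_span_symm_le {K V ι : Type*} [DivisionRing K] [AddCommGroup V] [Module K V]
    [Fintype ι] {g : ι → ι → V} (hg : ∀ i j, g i j = g j i) :
    Module.finrank K (span K {f | ∃ i j, f = g i j}) ≤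
      Fintype.card ι * (Fintype.card ι + 1) / 2 := by
  have hrange : {f | ∃ i j, f = g i j} = range (Sym2.lift ⟨g, hg⟩) := by
    ext f
    simp [Sym2.exists, eq_comm]
  rw [hrange]
  calc Module.finrank K (span K (range (Sym2.lift ⟨g, hg⟩)))
      ≤ Fintype.card (Sym2 ι) := finrank_range_le_card _
    _ = Fintype.card ι * (Fintype.card ι + 1) / 2 := by
      rw [Sym2.card, Nat.choose_two_right, Nat.mul_comm]
      simp

section TensorFun

variable {H : Type*} [NormedAddCommGroup H] [InnerProductSpace ℝ H]

noncomputable def tensorFunBilin (T : H →L[ℝ] H) :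
    H →ₗ[ℝ] H →ₗ[ℝ] (H →L[ℝ] H) →ₗ[ℝ] ℝ :=
  LinearMap.mk₂ ℝ (tensorFun T)
    (fun x₁ x₂ y => by ext S; simp [tensorFun, inner_add_left])
    (fun c x y => by ext S; simp [tensorFun, inner_smul_left])
    (fun x y₁ y₂ => by ext S; simp [tensorFun, inner_add_right])
    (fun c x y => by ext S; simp [tensorFun, inner_smul_right])

@[simp]
theorem tensorFunBilin_apply (T : H →L[ℝ] H) (x y : H) :
    tensorFunBilin T x y = tensorFun T x y :=
  rfl

end TensorFun

theorem stmt5_general {H : Type*} [NormedAddCommGroup H] [InnerProductSpace ℝ H]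
    (T : H →L[ℝ] H)
    (H₀ : Submodule ℝ H) {n : ℕ}
    (e : Fin n → H)
    (hespan : Submodule.span ℝ (Set.range e) = H₀) :
    Submodule.span ℝ {f : (H →L[ℝ] H) →ₗ[ℝ] ℝ |
        ∃ x : H, x ∈ H₀ ∧ ‖x‖ = 1 ∧ f = tensorFun T x x} =
      Submodule.span ℝ {f : (H →L[ℝ] H) →ₗ[ℝ] ℝ |
        ∃ i j : Fin n, i ≤ j ∧ f = tensorFun T (e i) (e j) + tensorFun T (e j) (e i)} ∧
    Module.finrank ℝ ↥(Submodule.span ℝ {f : (H →L[ℝ] H) →ₗ[ℝ] ℝ |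
        ∃ x : H, x ∈ H₀ ∧ ‖x‖ = 1 ∧ f = tensorFun T x x}) ≤ n * (n + 1) / 2 := by
  have hsymm : ∀ i j : Fin n, tensorFun T (e i) (e j) + tensorFun T (e j) (e i) =
      tensorFun T (e j) (e i) + tensorFun T (e i) (e j) := fun _ _ => add_comm _ _
  have hspan := (span_diag_unit_eq_span_diag (tensorFunBilin T) H₀).trans
    (hespan ▸ span_diag_eq_span_symm (tensorFunBilin T) e)
  simp only [tensorFunBilin_apply] at hspan
  rw [setOf_exists_le_and_eq_of_symm hsymm]
  refine ⟨hspan, hspan ▸ ?_⟩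
  simpa only [Fintype.card_fin] using finrank_span_symm_le (K := ℝ) hsymm

/-- For a norm-one operator `T` on a real Hilbert space with `M_T = S_{H₀}`, `H₀`
having orthonormal basis `e₁,…,e_n`, the span of `{x ⊗ Tx : x ∈ S_{H₀}}` equals the
span of `{eᵢ ⊗ Teⱼ + eⱼ ⊗ Teᵢ : i ≤ j}`, so its dimension is at most `n(n+1)/2`. -/
theorem stmt5 {H : Type*} [NormedAddCommGroup H] [InnerProductSpace ℝ H] [CompleteSpace H]
    (T : H →L[ℝ] H) (hT : ‖T‖ = 1)
    (H₀ : Submodule ℝ H) [FiniteDimensional ℝ H₀] {n : ℕ}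
    (hdim : Module.finrank ℝ H₀ = n)
    (e : Fin n → H) (he : Orthonormal ℝ e) (hemem : ∀ i, e i ∈ H₀)
    (hespan : Submodule.span ℝ (Set.range e) = H₀)
    (hMT : {x : H | ‖x‖ = 1 ∧ ‖T x‖ = 1} = {x : H | x ∈ H₀ ∧ ‖x‖ = 1}) :
    Submodule.span ℝ {f : (H →L[ℝ] H) →ₗ[ℝ] ℝ |
        ∃ x : H, x ∈ H₀ ∧ ‖x‖ = 1 ∧ f = tensorFun T x x} =
      Submodule.span ℝ {f : (H →L[ℝ] H) →ₗ[ℝ] ℝ |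
        ∃ i j : Fin n, i ≤ j ∧ f = tensorFun T (e i) (e j) + tensorFun T (e j) (e i)} ∧
    Module.finrank ℝ ↥(Submodule.span ℝ {f : (H →L[ℝ] H) →ₗ[ℝ] ℝ |
        ∃ x : H, x ∈ H₀ ∧ ‖x‖ = 1 ∧ f = tensorFun T x x}) ≤ n * (n + 1) / 2 :=
  stmt5_general T H₀ e hespan
end

section
/- Let X and Y be finite-dimensional real Banach spaces and T : X → Y a linear operator with ||T|| = 1. If x ∈ M_T ∩ Ext(B_X) and y* ∈ Ext J(Tx), then y* ∈ M_{T*} ∩ Ext(B_{Y*}) and x (viewed as an element of X** = X) belongs to Ext J(T* y*). -/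
open Metric

/-- The set of norm-one supporting functionals of `z`. -/
def Jset {E : Type*} [NormedAddCommGroup E] [NormedSpace ℝ E] (z : E) :
    Set (E →L[ℝ] ℝ) := {f | ‖f‖ = 1 ∧ f z = 1}

/-! For `‖z‖ ≤ 1`, `J(z)` is the face of the dual unit ball on which the functional `f ↦ f z`
attains its maximum `1`; extreme points of a face are extreme in the whole set, so `y*` is
extreme in `B_{Y*}`. Conversely `J(T* y*)` lies in `B_{X**}` and contains `x`,
and `x` is extreme in `B_{X**}` because in finite dimension `X → X**` is an onto linear isometry. -/

lemma isExtreme_setOf_eq_of_forall_le {E : Type*} [AddCommGroup E] [Module ℝ E] {A : Set E}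
    {φ : E →ₗ[ℝ] ℝ} {c : ℝ} (hφ : ∀ a ∈ A, φ a ≤ c) : IsExtreme ℝ A {a ∈ A | φ a = c} := by
  refine ⟨fun _ h => h.1, ?_⟩
  rintro a₁ ha₁ a₂ ha₂ _ ⟨-, hc⟩ ⟨s, t, hs, ht, hst, rfl⟩
  have h₁ := hφ a₁ ha₁
  have h₂ := hφ a₂ ha₂
  simp only [map_add, map_smul, smul_eq_mul] at hc
  have hsc : s * c ≤ s * φ a₁ := by
    have := mul_le_mul_of_nonneg_left h₂ ht.le
    rw [eq_sub_of_add_eq' hst] at this hc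
    linarith
  exact ⟨ha₁, le_antisymm h₁ (le_of_mul_le_mul_left hsc hs)⟩

section Jset

variable {E : Type*} [NormedAddCommGroup E] [NormedSpace ℝ E]

lemma Jset_subset_closedBall (z : E) : Jset z ⊆ closedBall 0 1 :=
  fun _ hf => mem_closedBall_zero_iff.2 hf.1.le

lemma Jset_eq_of_norm_le_one {z : E} (hz : ‖z‖ ≤ 1) :
    Jset z = {f ∈ closedBall (0 : E →L[ℝ] ℝ) 1 | f z = 1} := by
  ext f
  refine ⟨fun hf => ⟨Jset_subset_closedBall z hf, hf.2⟩, fun ⟨hf, hfz⟩ => ⟨?_, hfz⟩⟩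
  refine le_antisymm (mem_closedBall_zero_iff.1 hf) ?_
  calc (1 : ℝ) = f z := hfz.symm
    _ ≤ ‖f z‖ := Real.le_norm_self _
    _ ≤ ‖f‖ * ‖z‖ := f.le_opNorm z
    _ ≤ ‖f‖ := mul_le_of_le_one_right (norm_nonneg f) hz

lemma isExtreme_closedBall_Jset {z : E} (hz : ‖z‖ ≤ 1) :
    IsExtreme ℝ (closedBall 0 1) (Jset z) := by
  rw [Jset_eq_of_norm_le_one hz]
  refine isExtreme_setOf_eq_of_forall_le (φ := (ContinuousLinearMap.apply ℝ ℝ z).toLinearMap)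
    fun f hf => ?_
  calc f z ≤ ‖f z‖ := Real.le_norm_self _
    _ ≤ ‖f‖ * ‖z‖ := f.le_opNorm z
    _ ≤ 1 * 1 := mul_le_mul (mem_closedBall_zero_iff.1 hf) hz (norm_nonneg z) zero_le_one
    _ = 1 := one_mul 1

lemma comp_mem_Jset {F : Type*} [NormedAddCommGroup F] [NormedSpace ℝ F] {T : E →L[ℝ] F}
    (hT : ‖T‖ ≤ 1) {x : E} (hx : ‖x‖ ≤ 1) {f : F →L[ℝ] ℝ} (hf : f ∈ Jset (T x)) :
    f.comp T ∈ Jset x := by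
  rw [Jset_eq_of_norm_le_one hx]
  refine ⟨mem_closedBall_zero_iff.2 ?_, hf.2⟩
  calc ‖f.comp T‖ ≤ ‖f‖ * ‖T‖ := f.opNorm_comp_le T
    _ ≤ 1 := by rw [hf.1, one_mul]; exact hT

end Jset

section DoubleDual

open Module

variable {E : Type*} [NormedAddCommGroup E] [NormedSpace ℝ E] [FiniteDimensional ℝ E]

lemma finrank_strongDual : finrank ℝ (StrongDual ℝ E) = finrank ℝ E := by
  rw [← LinearMap.toContinuousLinearMap.finrank_eq, Subspace.dual_finrank_eq]

variable (E) in
noncomputable def inclusionInDoubleDualLinearIsometryEquiv :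
    E ≃ₗᵢ[ℝ] StrongDual ℝ (StrongDual ℝ E) :=
  (NormedSpace.inclusionInDoubleDualLi ℝ).toLinearIsometryEquiv
    (by rw [finrank_strongDual, finrank_strongDual])

lemma inclusionInDoubleDual_mem_extremePoints_closedBall {x : E}
    (hx : x ∈ Set.extremePoints ℝ (closedBall 0 1)) :
    NormedSpace.inclusionInDoubleDual ℝ E x ∈ Set.extremePoints ℝ (closedBall 0 1) := by
  have hball : inclusionInDoubleDualLinearIsometryEquiv E '' closedBall 0 1 = closedBall 0 1 := by
    rw [LinearIsometryEquiv.image_closedBall, LinearIsometryEquiv.map_zero]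
  rw [← hball, ← image_extremePoints]
  exact ⟨x, hx, rfl⟩

end DoubleDual

theorem stmt7_general {X Y : Type*} [NormedAddCommGroup X] [NormedSpace ℝ X] [FiniteDimensional ℝ X]
    [NormedAddCommGroup Y] [NormedSpace ℝ Y]
    (T : X →L[ℝ] Y) (hT : ‖T‖ = 1)
    (x : X) (hx : ‖x‖ = 1 ∧ ‖T x‖ = 1) (hxext : x ∈ Set.extremePoints ℝ (closedBall (0 : X) 1))
    (ystar : Y →L[ℝ] ℝ) (hystar : ystar ∈ Set.extremePoints ℝ (Jset (T x))) :
    (‖ystar‖ = 1 ∧ ‖ystar.comp T‖ = 1) ∧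
    ystar ∈ Set.extremePoints ℝ (closedBall (0 : Y →L[ℝ] ℝ) 1) ∧
    NormedSpace.inclusionInDoubleDual ℝ X x ∈ Set.extremePoints ℝ (Jset (ystar.comp T)) := by
  obtain ⟨hxn, hTxn⟩ := hx
  have hyJ : ystar ∈ Jset (T x) := hystar.1
  have hyTJ : ystar.comp T ∈ Jset x := comp_mem_Jset hT.le hxn.le hyJ
  have hxJ : NormedSpace.inclusionInDoubleDual ℝ X x ∈ Jset (ystar.comp T) :=
    ⟨((inclusionInDoubleDualLinearIsometryEquiv X).norm_map x).trans hxn, hyTJ.2⟩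
  exact ⟨⟨hyJ.1, hyTJ.1⟩,
    (isExtreme_closedBall_Jset hTxn.le).extremePoints_subset_extremePoints hystar,
    inter_extremePoints_subset_extremePoints_of_subset (Jset_subset_closedBall _)
      ⟨hxJ, inclusionInDoubleDual_mem_extremePoints_closedBall hxext⟩⟩

/-- If `x ∈ M_T ∩ Ext(B_X)` and `y* ∈ Ext J(Tx)`, then `y* ∈ M_{T*} ∩ Ext(B_{Y*})` and
`x` (viewed in `X**`) belongs to `Ext J(T* y*)`. -/
theorem stmt7 {X Y : Type*} [NormedAddCommGroup X] [NormedSpace ℝ X] [FiniteDimensional ℝ X]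
    [NormedAddCommGroup Y] [NormedSpace ℝ Y] [FiniteDimensional ℝ Y]
    (T : X →L[ℝ] Y) (hT : ‖T‖ = 1)
    (x : X) (hx : ‖x‖ = 1 ∧ ‖T x‖ = 1) (hxext : x ∈ Set.extremePoints ℝ (closedBall (0 : X) 1))
    (ystar : Y →L[ℝ] ℝ) (hystar : ystar ∈ Set.extremePoints ℝ (Jset (T x))) :
    (‖ystar‖ = 1 ∧ ‖ystar.comp T‖ = 1) ∧
    ystar ∈ Set.extremePoints ℝ (closedBall (0 : Y →L[ℝ] ℝ) 1) ∧
    NormedSpace.inclusionInDoubleDual ℝ X x ∈ Set.extremePoints ℝ (Jset (ystar.comp T)) :=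
  stmt7_general T hT x hx hxext ystar hystar
end

section
/- Let T : H₁ → H₂ be a bounded linear operator between real Hilbert spaces with ||T|| = 1. Then the norm attainment set M_T = {x : ||x|| = 1, ||Tx|| = 1}, if nonempty, is of the form S_{H₀} for some subspace H₀ of H₁, i.e., M_T ∪ {0} is closed under scalar multiplication by unit scalars and the set of norm-attaining directions forms a linear subspace. -/
/-!
For a contraction `T` one has `‖T†T x - x‖² = ‖T†T x‖² - 2‖T x‖² + ‖x‖² ≤ ‖x‖² - ‖T x‖²`,
so `T` attains its norm at a unit vector `x` exactly when `T†T x = x`. The norm attainment set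
is therefore the unit sphere of the eigenspace of `T†T` for the eigenvalue `1`.
-/

open ContinuousLinearMap

section
variable {𝕜 E F : Type*} [RCLike 𝕜]
  [NormedAddCommGroup E] [InnerProductSpace 𝕜 E] [CompleteSpace E]
  [NormedAddCommGroup F] [InnerProductSpace 𝕜 F] [CompleteSpace F]

theorem re_inner_adjoint_comp_self_apply (T : E →L[𝕜] F) (x : E) :
    RCLike.re (inner 𝕜 ((adjoint T ∘L T) x) x) = ‖T x‖ ^ 2 := by
  rw [comp_apply, adjoint_inner_left, inner_self_eq_norm_sq]

theorem norm_adjoint_comp_self_apply_sub_sq_le {T : E →L[𝕜] F} (hT : ‖T‖ ≤ 1) (x : E) :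
    ‖(adjoint T ∘L T) x - x‖ ^ 2 ≤ ‖x‖ ^ 2 - ‖T x‖ ^ 2 := by
  have hle : ‖(adjoint T ∘L T) x‖ ≤ ‖T x‖ :=
    calc ‖adjoint T (T x)‖ ≤ ‖adjoint T‖ * ‖T x‖ := le_opNorm _ _
      _ ≤ 1 * ‖T x‖ := by gcongr; rwa [LinearIsometryEquiv.norm_map]
      _ = ‖T x‖ := one_mul _
  rw [norm_sub_sq (𝕜 := 𝕜), re_inner_adjoint_comp_self_apply]
  nlinarith [norm_nonneg ((adjoint T ∘L T) x)]

theorem norm_apply_eq_norm_iff_mem_eigenspace_adjoint_comp_self_one {T : E →L[𝕜] F}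
    (hT : ‖T‖ ≤ 1) (x : E) :
    ‖T x‖ = ‖x‖ ↔ x ∈ Module.End.eigenspace ((adjoint T ∘L T : E →L[𝕜] E) : E →ₗ[𝕜] E) 1 := by
  rw [Module.End.mem_eigenspace_iff, one_smul, coe_coe]
  constructor
  · intro hx
    have hsq := norm_adjoint_comp_self_apply_sub_sq_le hT x
    rw [hx, sub_self] at hsq
    exact sub_eq_zero.mp (norm_eq_zero.mp (pow_eq_zero_iff two_ne_zero |>.mp
      (le_antisymm hsq (sq_nonneg _))))
  · intro hx
    have hsq := re_inner_adjoint_comp_self_apply T x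
    rw [hx, inner_self_eq_norm_sq] at hsq
    exact ((pow_left_inj₀ (norm_nonneg _) (norm_nonneg _) two_ne_zero).mp hsq).symm
end


theorem stmt13_general {H₁ H₂ : Type*}
    [NormedAddCommGroup H₁] [InnerProductSpace ℝ H₁] [CompleteSpace H₁]
    [NormedAddCommGroup H₂] [InnerProductSpace ℝ H₂] [CompleteSpace H₂]
    (T : H₁ →L[ℝ] H₂) (hT : ‖T‖ = 1) :
    ∃ H₀ : Submodule ℝ H₁,
      {x : H₁ | ‖x‖ = 1 ∧ ‖T x‖ = 1} = {x : H₁ | x ∈ H₀ ∧ ‖x‖ = 1} := by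
  refine ⟨Module.End.eigenspace ((adjoint T ∘L T : H₁ →L[ℝ] H₁) : H₁ →ₗ[ℝ] H₁) 1, ?_⟩
  ext x
  rw [Set.mem_ofPred_eq, Set.mem_ofPred_eq,
    ← norm_apply_eq_norm_iff_mem_eigenspace_adjoint_comp_self_one hT.le]
  constructor
  · rintro ⟨hx, hTx⟩
    exact ⟨hTx.trans hx.symm, hx⟩
  · rintro ⟨hTx, hx⟩
    exact ⟨hx, hTx.trans hx⟩

/-- For a norm-one bounded operator between real Hilbert spaces, the norm attainment set,
if nonempty, is the unit sphere of some subspace `H₀` of `H₁`. -/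
theorem stmt13 {H₁ H₂ : Type*}
    [NormedAddCommGroup H₁] [InnerProductSpace ℝ H₁] [CompleteSpace H₁]
    [NormedAddCommGroup H₂] [InnerProductSpace ℝ H₂] [CompleteSpace H₂]
    (T : H₁ →L[ℝ] H₂) (hT : ‖T‖ = 1)
    (hne : {x : H₁ | ‖x‖ = 1 ∧ ‖T x‖ = 1}.Nonempty) :
    ∃ H₀ : Submodule ℝ H₁,
      {x : H₁ | ‖x‖ = 1 ∧ ‖T x‖ = 1} = {x : H₁ | x ∈ H₀ ∧ ‖x‖ = 1} :=
  stmt13_general T hT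
end

section
/- Let X = ℓ_∞³ and Y a two-dimensional real Banach space, and let T : X → Y be linear with ||T|| = 1, M_T ∩ Ext(B_X) = {±x₁,±x₂,±x₃,±x₄} with x₁=(1,1,1), x₂=(-1,1,1), x₃=(-1,-1,1), x₄=(1,-1,1). If Tx₁ = -Tx₂ and Tx₁ ∈ Ext(B_Y), then T has rank 1. -/
open Metric

/-!
With `x₃ = (-1, -1, 1)`, both `x₁ - x₂ + x₃` and `x₃` lie in the unit ball of `ℓ∞³`, so `Tx₁ = -Tx₂`
exhibits `Tx₁` as the midpoint of two points `T(x₁ - x₂ + x₃)` and `-Tx₃` of the unit ball of `Y`.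
Extremality forces `Tx₃ = -Tx₁`. Since `x₁, x₂, x₃` form a basis and all three images are `±Tx₁`,
`T x = x 0 • Tx₁`, and `Tx₁ ≠ 0` because `‖T‖ = 1`.
-/

theorem eq_of_mem_extremePoints_of_add_eq_two_smul {E : Type*} [AddCommGroup E]
    [Module ℝ E] {s : Set E} {x a b : E} (hx : x ∈ Set.extremePoints ℝ s) (ha : a ∈ s)
    (hb : b ∈ s) (hab : a + b = (2 : ℝ) • x) : a = x :=
  hx.2 ha hb ⟨1 / 2, 1 / 2, by norm_num, by norm_num, by norm_num, by
    rw [← smul_add, hab, smul_smul]; norm_num⟩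

theorem LinearMap.eq_proj_zero_smulRight_of_map_sign_vectors {M : Type*} [AddCommGroup M]
    [Module ℝ M] (f : (Fin 3 → ℝ) →ₗ[ℝ] M) (h₂ : f ![-1, 1, 1] = -f ![1, 1, 1])
    (h₃ : f ![-1, -1, 1] = -f ![1, 1, 1]) :
    f = (LinearMap.proj 0).smulRight (f ![1, 1, 1]) := by
  refine LinearMap.ext fun x => ?_
  have hdecomp : x = ((x 0 + x 2) / 2) • ![1, 1, 1] + ((x 1 - x 0) / 2) • ![-1, 1, 1]
      + ((x 2 - x 1) / 2) • ![-1, -1, 1] := by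
    funext i
    fin_cases i <;> simp <;> ring
  conv_lhs => rw [hdecomp]
  rw [map_add, map_add, map_smul, map_smul, map_smul, h₂, h₃, LinearMap.smulRight_apply,
    LinearMap.proj_apply]
  module

theorem stmt14_general {Y : Type*} [NormedAddCommGroup Y] [NormedSpace ℝ Y]
    (T : (Fin 3 → ℝ) →L[ℝ] Y) (hT : ‖T‖ = 1)
    (x₁ x₂ : Fin 3 → ℝ)
    (h₁ : x₁ = ![1, 1, 1]) (h₂ : x₂ = ![-1, 1, 1])
    (h12 : T x₁ = -T x₂)
    (hext : T x₁ ∈ Set.extremePoints ℝ (closedBall (0 : Y) 1)) :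
    Module.finrank ℝ ↥(LinearMap.range (T : (Fin 3 → ℝ) →ₗ[ℝ] Y)) = 1 := by
  subst h₁ h₂
  have hball : ∀ v : Fin 3 → ℝ, (∀ i, ‖v i‖ ≤ 1) → T v ∈ closedBall 0 1 := fun v hv =>
    mem_closedBall_zero_iff.2 <| T.le_of_opNorm_le hT.le v |>.trans <| by
      rw [one_mul]; exact (pi_norm_le_iff_of_nonneg zero_le_one).2 hv
  have hT₃ : -T ![-1, -1, 1] = T ![1, 1, 1] := by
    have hT₃_mem : -T ![-1, -1, 1] ∈ closedBall 0 1 := by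
      simpa using hball ![-1, -1, 1] (by intro i; fin_cases i <;> simp)
    have hT₄_mem : T (![1, 1, 1] - ![-1, 1, 1] + ![-1, -1, 1]) ∈ closedBall 0 1 :=
      hball _ (by intro i; fin_cases i <;> simp)
    refine eq_of_mem_extremePoints_of_add_eq_two_smul hext hT₃_mem hT₄_mem ?_
    rw [map_add, map_sub, h12]
    module
  have hT_eq := (T : (Fin 3 → ℝ) →ₗ[ℝ] Y).eq_proj_zero_smulRight_of_map_sign_vectors
    (by simp [h12]) (by simp [← hT₃])
  have hne : T ![1, 1, 1] ≠ 0 := by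
    intro h0
    have : T = 0 := ContinuousLinearMap.ext fun x => by
      simpa [h0] using LinearMap.congr_fun hT_eq x
    simp [this] at hT
  rw [hT_eq, LinearMap.range_smulRight_apply_of_surjective (LinearMap.proj_surjective 0)]
  exact finrank_span_singleton hne

/-- Case of Theorem 3.6(III): if `M_T ∩ Ext(B_{ℓ³_∞}) = {±x₁,±x₂,±x₃,±x₄}`,
`Tx₁ = -Tx₂` and `Tx₁ ∈ Ext(B_Y)`, then `T` has rank `1`. -/
theorem stmt14 {Y : Type*} [NormedAddCommGroup Y] [NormedSpace ℝ Y]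
    (hY : Module.finrank ℝ Y = 2)
    (T : (Fin 3 → ℝ) →L[ℝ] Y) (hT : ‖T‖ = 1)
    (x₁ x₂ x₃ x₄ : Fin 3 → ℝ)
    (h₁ : x₁ = ![1, 1, 1]) (h₂ : x₂ = ![-1, 1, 1]) (h₃ : x₃ = ![-1, -1, 1])
    (h₄ : x₄ = ![1, -1, 1])
    (hMT : {z : Fin 3 → ℝ | ‖z‖ = 1 ∧ ‖T z‖ = 1} ∩
        Set.extremePoints ℝ (closedBall (0 : Fin 3 → ℝ) 1) =
      {x₁, -x₁, x₂, -x₂, x₃, -x₃, x₄, -x₄})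
    (h12 : T x₁ = -T x₂)
    (hext : T x₁ ∈ Set.extremePoints ℝ (closedBall (0 : Y) 1)) :
    Module.finrank ℝ ↥(LinearMap.range (T : (Fin 3 → ℝ) →ₗ[ℝ] Y)) = 1 :=
  stmt14_general T hT x₁ x₂ h₁ h₂ h12 hext
end

section
/- Let H be a real Hilbert space and T a bounded linear operator on H with ||T|| = 1 whose norm attainment set equals S_{H₀} for a finite-dimensional subspace H₀, and ||T restricted to H₀^⊥|| < 1. Then for any bounded operator A on H, T is Birkhoff–James orthogonal to A if and only if there exists a unit vector x ∈ H₀ with ⟨Tx, Ax⟩ = 0. -/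
/-!
If `T` has no unit vector `x ∈ H₀` with `⟪T x, A x⟫ = 0`, the quadratic form `x ↦ ⟪T x, A x⟫`
has constant sign on the unit sphere of `H₀` (two unit vectors are joined by a segment avoiding
`0`, or are opposite), so by compactness it is `≥ δ ‖x‖²` on `H₀` after replacing `A` by `-A`.
Since `T` attains its norm on `H₀`, it preserves inner products with vectors of `H₀`, so for
`x = u + v` with `u ∈ H₀`, `v ∈ H₀ᗮ` one gets
`‖(T - t A) x‖² ≤ (1 - t δ + O(t²)) ‖u‖² + (‖T|_{H₀ᗮ}‖² + O(t)) ‖v‖²`,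
hence `‖T - t A‖ < 1 = ‖T‖` for small `t > 0`. Conversely, a unit `x ∈ H₀` with
`⟪T x, A x⟫ = 0` gives `‖(T + λ A) x‖² = 1 + λ² ‖A x‖² ≥ 1`.
-/

open scoped RealInnerProductSpace
open Filter Topology

section Homogeneous

variable {E : Type*} [NormedAddCommGroup E] [NormedSpace ℝ E] {f : E → ℝ}

lemma apply_eq_norm_sq_mul_apply_inv_norm_smul (hhom : ∀ (c : ℝ) x, f (c • x) = c ^ 2 * f x)
    (x : E) : f x = ‖x‖ ^ 2 * f (‖x‖⁻¹ • x) := by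
  rcases eq_or_ne x 0 with rfl | hx
  · simpa using hhom 0 0
  · rw [hhom, ← mul_assoc, ← mul_pow, mul_inv_cancel₀ (norm_ne_zero_iff.2 hx), one_pow, one_mul]

lemma pos_of_pos_of_norm_eq_one (hf : Continuous f) (hhom : ∀ (c : ℝ) x, f (c • x) = c ^ 2 * f x)
    (hne : ∀ x, ‖x‖ = 1 → f x ≠ 0) {u x : E} (hu : ‖u‖ = 1) (hx : ‖x‖ = 1) (hfu : 0 < f u) :
    0 < f x := by
  rcases eq_or_ne x (-u) with rfl | hxu
  · rw [← neg_one_smul ℝ u, hhom]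
    simpa using hfu
  by_contra! hfx
  obtain ⟨w, hw, hfw⟩ : ∃ w ∈ segment ℝ x u, f w = 0 :=
    (convex_segment x u).isPreconnected.intermediate_value (left_mem_segment ℝ x u)
      (right_mem_segment ℝ x u) hf.continuousOn ⟨hfx, hfu.le⟩
  -- the segment between two unit vectors passes through `0` only if they are opposite
  have hw0 : w ≠ 0 := by
    rintro rfl
    rw [mem_segment_iff_sameRay, zero_sub, sub_zero] at hw
    exact hxu (neg_eq_iff_eq_neg.1 (hw.eq_of_norm_eq (by rw [norm_neg, hx, hu])))
  rw [apply_eq_norm_sq_mul_apply_inv_norm_smul hhom] at hfw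
  exact hne _ (norm_smul_inv_norm hw0)
    ((mul_eq_zero.1 hfw).resolve_left (pow_ne_zero _ (norm_ne_zero_iff.2 hw0)))

variable [FiniteDimensional ℝ E]

lemma exists_pos_mul_norm_sq_le (hf : Continuous f) (hhom : ∀ (c : ℝ) x, f (c • x) = c ^ 2 * f x)
    (hpos : ∀ x, ‖x‖ = 1 → 0 < f x) : ∃ δ > 0, ∀ x, δ * ‖x‖ ^ 2 ≤ f x := by
  obtain ⟨δ, hδ, hle⟩ := (isCompact_sphere (0 : E) 1).exists_forall_le' hf.continuousOn
    fun x hx ↦ hpos x (mem_sphere_zero_iff_norm.1 hx)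
  refine ⟨δ, hδ, fun x ↦ ?_⟩
  rw [apply_eq_norm_sq_mul_apply_inv_norm_smul hhom x, mul_comm δ]
  rcases eq_or_ne x 0 with rfl | hx
  · simp
  exact mul_le_mul_of_nonneg_left
    (hle _ (mem_sphere_zero_iff_norm.2 (norm_smul_inv_norm hx))) (sq_nonneg _)

lemma exists_pos_mul_norm_sq_le_or_le_neg (hf : Continuous f)
    (hhom : ∀ (c : ℝ) x, f (c • x) = c ^ 2 * f x) (hne : ∀ x, ‖x‖ = 1 → f x ≠ 0) :
    ∃ δ > 0, (∀ x, δ * ‖x‖ ^ 2 ≤ f x) ∨ ∀ x, δ * ‖x‖ ^ 2 ≤ -f x := by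
  by_cases h : ∃ u, ‖u‖ = 1 ∧ 0 < f u
  · obtain ⟨u, hu, hfu⟩ := h
    obtain ⟨δ, hδ, hle⟩ := exists_pos_mul_norm_sq_le hf hhom
      fun x hx ↦ pos_of_pos_of_norm_eq_one hf hhom hne hu hx hfu
    exact ⟨δ, hδ, .inl hle⟩
  · push Not at h
    obtain ⟨δ, hδ, hle⟩ := exists_pos_mul_norm_sq_le (f := fun x ↦ -f x) hf.neg
      (fun c x ↦ by rw [hhom, mul_neg]) fun x hx ↦ neg_pos.2 ((h x hx).lt_of_ne (hne x hx))
    exact ⟨δ, hδ, .inr hle⟩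

end Homogeneous

section Operator

variable {E F : Type*} [NormedAddCommGroup E] [InnerProductSpace ℝ E]
  [NormedAddCommGroup F] [InnerProductSpace ℝ F]

lemma inner_map_map_of_norm_map_eq {T : E →L[ℝ] F} (hT : ‖T‖ ≤ 1) {u : E} (hu : ‖T u‖ = ‖u‖)
    (v : E) : ⟪T u, T v⟫ = ⟪u, v⟫ := by
  have hquad : ∀ s : ℝ,
      0 ≤ (‖v‖ ^ 2 - ‖T v‖ ^ 2) * (s * s) + 2 * (⟪u, v⟫ - ⟪T u, T v⟫) * s + 0 := by
    intro s
    have h : ‖T (u + s • v)‖ ^ 2 ≤ ‖u + s • v‖ ^ 2 := by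
      gcongr
      simpa using T.le_of_opNorm_le hT (u + s • v)
    rw [map_add, map_smul, norm_add_sq_real, norm_add_sq_real, real_inner_smul_right,
      real_inner_smul_right, norm_smul, norm_smul, hu, Real.norm_eq_abs, mul_pow, mul_pow,
      sq_abs] at h
    linarith
  have hdiscrim := discrim_le_zero hquad
  rw [discrim] at hdiscrim
  nlinarith [sq_nonneg (⟪u, v⟫ - ⟪T u, T v⟫)]

lemma norm_map_eq_of_mem_of_forall_norm_map_eq_one {T : E →L[ℝ] F} {H₀ : Submodule ℝ E}
    (hattain : ∀ x ∈ H₀, ‖x‖ = 1 → ‖T x‖ = 1) {u : E} (hu : u ∈ H₀) : ‖T u‖ = ‖u‖ := by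
  rcases eq_or_ne u 0 with rfl | hu0
  · simp
  have h := hattain _ (H₀.smul_mem ‖u‖⁻¹ hu) (norm_smul_inv_norm hu0 : ‖‖u‖⁻¹ • u‖ = 1)
  rwa [map_smul, norm_smul, norm_inv, norm_norm, inv_mul_eq_one₀ (norm_ne_zero_iff.2 hu0),
    eq_comm] at h

lemma norm_le_norm_add_smul_of_inner_eq_zero {T A : E →L[ℝ] F} {x : E} (hx : ‖x‖ = 1)
    (hTx : ‖T x‖ = ‖T‖) (hTA : ⟪T x, A x⟫ = 0) (lam : ℝ) : ‖T‖ ≤ ‖T + lam • A‖ := by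
  have hsq : ‖T‖ ^ 2 ≤ ‖(T + lam • A) x‖ ^ 2 := by
    rw [add_apply, smul_apply, norm_add_sq_real, real_inner_smul_right, hTA, hTx]
    nlinarith [sq_nonneg ‖lam • A x‖]
  calc ‖T‖ ≤ ‖(T + lam • A) x‖ := le_of_pow_le_pow_left₀ two_ne_zero (norm_nonneg _) hsq
    _ ≤ ‖T + lam • A‖ := by simpa [hx] using (T + lam • A).le_opNorm x

variable {T A : E →L[ℝ] F} {H₀ : Submodule ℝ E} {δ : ℝ}

lemma norm_sub_smul_apply_sq_le (hT : ‖T‖ ≤ 1) (hiso : ∀ u ∈ H₀, ∀ w, ⟪T u, T w⟫ = ⟪u, w⟫)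
    (hδ : 0 < δ) (hA : ∀ u ∈ H₀, δ * ‖u‖ ^ 2 ≤ ⟪T u, A u⟫) {t : ℝ} (ht : 0 ≤ t)
    {u v : E} (hu : u ∈ H₀) (hv : v ∈ H₀ᗮ) :
    ‖(T - t • A) (u + v)‖ ^ 2 ≤ (1 - t * δ + t ^ 2 * ‖A‖ ^ 2) * ‖u‖ ^ 2 +
      (‖T.comp H₀ᗮ.subtypeL‖ ^ 2 + t * (2 * ‖A‖ + t * ‖A‖ ^ 2 + 4 * ‖A‖ ^ 2 / δ)) * ‖v‖ ^ 2 := by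
  set a := ‖A‖
  set c := ‖T.comp H₀ᗮ.subtypeL‖
  have huv : ⟪u, v⟫ = 0 := Submodule.inner_right_of_mem_orthogonal hu hv
  have hTu : ‖T u‖ = ‖u‖ := by
    have h := hiso u hu u
    rwa [real_inner_self_eq_norm_sq, real_inner_self_eq_norm_sq,
      sq_eq_sq₀ (norm_nonneg _) (norm_nonneg _)] at h
  have hTv : ‖T v‖ ^ 2 ≤ c ^ 2 * ‖v‖ ^ 2 := by
    rw [← mul_pow]
    gcongr
    exact (T.comp H₀ᗮ.subtypeL).le_opNorm ⟨v, hv⟩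
  have hTv' : ‖T v‖ ≤ ‖v‖ := by simpa using T.le_of_opNorm_le hT v
  have hTx : ‖T (u + v)‖ ^ 2 = ‖u‖ ^ 2 + ‖T v‖ ^ 2 := by
    rw [map_add, norm_add_sq_real, hiso u hu v, huv, hTu]
    ring
  have hAx : ‖A (u + v)‖ ^ 2 ≤ a ^ 2 * (‖u‖ ^ 2 + ‖v‖ ^ 2) := by
    have h : ‖u + v‖ ^ 2 = ‖u‖ ^ 2 + ‖v‖ ^ 2 := by
      simpa only [sq] using norm_add_sq_eq_norm_sq_add_norm_sq_real huv
    rw [← h, ← mul_pow]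
    gcongr
    exact A.le_opNorm _
  have hinner : δ * ‖u‖ ^ 2 - 2 * a * ‖u‖ * ‖v‖ - a * ‖v‖ ^ 2 ≤ ⟪T (u + v), A (u + v)⟫ := by
    have h1 := neg_le_of_abs_le ((abs_real_inner_le_norm (T u) (A v)).trans
      (mul_le_mul (le_of_eq hTu) (A.le_opNorm v) (norm_nonneg _) (norm_nonneg _)))
    have h2 := neg_le_of_abs_le ((abs_real_inner_le_norm (T v) (A u)).trans
      (mul_le_mul hTv' (A.le_opNorm u) (norm_nonneg _) (norm_nonneg _)))
    have h3 := neg_le_of_abs_le ((abs_real_inner_le_norm (T v) (A v)).trans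
      (mul_le_mul hTv' (A.le_opNorm v) (norm_nonneg _) (norm_nonneg _)))
    rw [map_add, map_add, inner_add_left, inner_add_right, inner_add_right]
    linarith [hA u hu]
  have hamgm : 4 * a * ‖u‖ * ‖v‖ ≤ δ * ‖u‖ ^ 2 + 4 * a ^ 2 / δ * ‖v‖ ^ 2 := by
    have h := div_nonneg (sq_nonneg (δ * ‖u‖ - 2 * a * ‖v‖)) hδ.le
    have e : (δ * ‖u‖ - 2 * a * ‖v‖) ^ 2 / δ =
        δ * ‖u‖ ^ 2 + 4 * a ^ 2 / δ * ‖v‖ ^ 2 - 4 * a * ‖u‖ * ‖v‖ := by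
      field_simp
      ring
    linarith
  rw [sub_apply, smul_apply, norm_sub_sq_real, real_inner_smul_right, norm_smul,
    Real.norm_eq_abs, mul_pow, sq_abs, hTx]
  linarith [mul_le_mul_of_nonneg_left hinner ht, mul_le_mul_of_nonneg_left hAx (sq_nonneg t),
    mul_le_mul_of_nonneg_left hamgm ht]

lemma exists_norm_sub_smul_lt_one [H₀.HasOrthogonalProjection] (hT : ‖T‖ ≤ 1)
    (hiso : ∀ u ∈ H₀, ∀ w, ⟪T u, T w⟫ = ⟪u, w⟫) (hδ : 0 < δ)
    (hA : ∀ u ∈ H₀, δ * ‖u‖ ^ 2 ≤ ⟪T u, A u⟫) (hperp : ‖T.comp H₀ᗮ.subtypeL‖ < 1) :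
    ∃ t : ℝ, ‖T - t • A‖ < 1 := by
  set a := ‖A‖
  set c := ‖T.comp H₀ᗮ.subtypeL‖
  have hc0 : 0 ≤ c := (T.comp H₀ᗮ.subtypeL).opNorm_nonneg
  have hsmall : ∀ᶠ t in 𝓝 (0 : ℝ),
      t * a ^ 2 < δ ∧ c ^ 2 + t * (2 * a + t * a ^ 2 + 4 * a ^ 2 / δ) < 1 := by
    refine (ContinuousAt.eventually_lt (by fun_prop) (by fun_prop) (by simpa using hδ)).and
      (ContinuousAt.eventually_lt (by fun_prop) (by fun_prop) ?_)
    simpa using pow_lt_one₀ hc0 hperp two_ne_zero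
  obtain ⟨t, ⟨hδt, hct⟩, ht : 0 < t⟩ :=
    ((hsmall.filter_mono nhdsWithin_le_nhds).and (self_mem_nhdsWithin (s := Set.Ioi 0))).exists
  set r := max (1 - t * δ + t ^ 2 * a ^ 2) (c ^ 2 + t * (2 * a + t * a ^ 2 + 4 * a ^ 2 / δ))
  have hr : r < 1 := max_lt (by nlinarith) hct
  have hr0 : 0 ≤ r := le_max_of_le_right (by positivity)
  have hbound : ∀ x, ‖(T - t • A) x‖ ≤ √r * ‖x‖ := by
    intro x
    obtain ⟨u, hu, v, hv, rfl⟩ := H₀.exists_add_mem_mem_orthogonal x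
    have huv : ‖u + v‖ ^ 2 = ‖u‖ ^ 2 + ‖v‖ ^ 2 := by
      simpa only [sq] using norm_add_sq_eq_norm_sq_add_norm_sq_real
        (Submodule.inner_right_of_mem_orthogonal hu hv)
    refine le_of_pow_le_pow_left₀ two_ne_zero (by positivity) ?_
    calc ‖(T - t • A) (u + v)‖ ^ 2
        ≤ (1 - t * δ + t ^ 2 * a ^ 2) * ‖u‖ ^ 2 +
          (c ^ 2 + t * (2 * a + t * a ^ 2 + 4 * a ^ 2 / δ)) * ‖v‖ ^ 2 :=
          norm_sub_smul_apply_sq_le hT hiso hδ hA ht.le hu hv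
      _ ≤ r * ‖u‖ ^ 2 + r * ‖v‖ ^ 2 := by gcongr; exacts [le_max_left _ _, le_max_right _ _]
      _ = (√r * ‖u + v‖) ^ 2 := by rw [mul_pow, Real.sq_sqrt hr0, huv, mul_add]
  refine ⟨t, (T - t • A).opNorm_le_bound (by positivity) hbound |>.trans_lt ?_⟩
  rwa [Real.sqrt_lt' one_pos, one_pow]

end Operator

theorem stmt17_general {H : Type*} [NormedAddCommGroup H] [InnerProductSpace ℝ H]
    (T : H →L[ℝ] H) (hT : ‖T‖ = 1)
    (H₀ : Submodule ℝ H) [FiniteDimensional ℝ H₀]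
    (hMT : {x : H | ‖x‖ = 1 ∧ ‖T x‖ = 1} = {x : H | x ∈ H₀ ∧ ‖x‖ = 1})
    (hperp : ‖T.comp H₀ᗮ.subtypeL‖ < 1) :
    ∀ A : H →L[ℝ] H,
      (∀ lam : ℝ, ‖T + lam • A‖ ≥ ‖T‖) ↔
        ∃ x : H, x ∈ H₀ ∧ ‖x‖ = 1 ∧ (inner ℝ (T x) (A x) : ℝ) = 0 := by
  intro A
  have hattain : ∀ x ∈ H₀, ‖x‖ = 1 → ‖T x‖ = 1 := fun x hx hx1 ↦ (hMT.ge ⟨hx, hx1⟩).2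
  have hiso : ∀ u ∈ H₀, ∀ w, ⟪T u, T w⟫ = ⟪u, w⟫ := fun u hu ↦
    inner_map_map_of_norm_map_eq hT.le (norm_map_eq_of_mem_of_forall_norm_map_eq_one hattain hu)
  refine ⟨fun hBJ ↦ ?_, fun ⟨x, hx, hx1, hTA⟩ lam ↦
    norm_le_norm_add_smul_of_inner_eq_zero hx1 (by rw [hT, hattain x hx hx1]) hTA lam⟩
  by_contra! hno
  obtain ⟨δ, hδ, hpos | hneg⟩ := exists_pos_mul_norm_sq_le_or_le_neg
    (f := fun y : H₀ ↦ ⟪T y, A y⟫) (by fun_prop)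
    (fun c y ↦ by simp only [Submodule.coe_smul, map_smul, real_inner_smul_left,
      real_inner_smul_right]; ring)
    fun y hy ↦ hno y y.2 hy
  · obtain ⟨t, ht⟩ := exists_norm_sub_smul_lt_one hT.le hiso hδ (fun u hu ↦ hpos ⟨u, hu⟩) hperp
    have := hBJ (-t)
    rw [neg_smul, ← sub_eq_add_neg, hT] at this
    linarith
  · obtain ⟨t, ht⟩ := exists_norm_sub_smul_lt_one (A := -A) hT.le hiso hδ
      (fun u hu ↦ by simpa using hneg ⟨u, hu⟩) hperp
    rw [smul_neg, sub_neg_eq_add] at ht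
    have := hBJ t
    rw [hT] at this
    linarith

/-- For a norm-one operator `T` on a real Hilbert space whose norm attainment set is
the unit sphere of a finite-dimensional subspace `H₀` with `‖T|_{H₀^⊥}‖ < 1`:
`T ⊥_B A` iff there is a unit vector `x ∈ H₀` with `⟨Tx, Ax⟩ = 0`. -/
theorem stmt17 {H : Type*} [NormedAddCommGroup H] [InnerProductSpace ℝ H] [CompleteSpace H]
    (T : H →L[ℝ] H) (hT : ‖T‖ = 1)
    (H₀ : Submodule ℝ H) [FiniteDimensional ℝ H₀]
    (hMT : {x : H | ‖x‖ = 1 ∧ ‖T x‖ = 1} = {x : H | x ∈ H₀ ∧ ‖x‖ = 1})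
    (hperp : ‖T.comp H₀ᗮ.subtypeL‖ < 1) :
    ∀ A : H →L[ℝ] H,
      (∀ lam : ℝ, ‖T + lam • A‖ ≥ ‖T‖) ↔
        ∃ x : H, x ∈ H₀ ∧ ‖x‖ = 1 ∧ (inner ℝ (T x) (A x) : ℝ) = 0 :=
  stmt17_general T hT H₀ hMT hperp
end
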